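/- arXiv:2105.12304 — 3 statements merged into one kernel-verified Lean document; each statement's English description precedes it below -/
import Mathlib

section
/- Let Ḡ be a CDF on [a,b] with mean μ̄, let π∈[a,b] with H_{π,b}(x) ≤ Ḡ(x) for all x, and let τ∈[π,b] satisfy that the truncated Pareto distribution H_{π,τ} has mean μ̄. Then Ḡ is a mean-preserving spread of H_{π,τ}: ∫_a^z Ḡ(x)dx ≥ ∫_a^z H_{π,τ}(x)dx for all z∈[a,b], with equality at z=b. -/
open MeasureTheory

/-- Truncated Pareto cdf with lower point `p` and truncation point `q`. -/
noncomputable def Hpar (p q x : ℝ) : ℝ :=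
  if x < p then 0 else if x < q then 1 - p / x else 1

lemma ae_ne_pt (c : ℝ) : ∀ᵐ x : ℝ, x ≠ c := by
  rw [ae_iff]
  simp [Set.setOf_eq_eq_singleton]

lemma measurable_Hpar (p q : ℝ) : Measurable (Hpar p q) := by
  unfold Hpar
  exact Measurable.ite measurableSet_Iio measurable_const <|
    Measurable.ite measurableSet_Iio
      (measurable_const.sub (measurable_const.div measurable_id)) measurable_const

lemma Hpar_nonneg {p : ℝ} (hp : 0 ≤ p) (q x : ℝ) : 0 ≤ Hpar p q x := by
  unfold Hpar
  split_ifs with h1 h2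
  · exact le_rfl
  · rcases lt_or_eq_of_le (hp.trans (not_lt.1 h1)) with hx | hx
    · have : p / x ≤ 1 := (div_le_one hx).2 (not_lt.1 h1)
      linarith
    · simp [← hx]
  · exact zero_le_one

lemma Hpar_le_one {p : ℝ} (hp : 0 ≤ p) (q x : ℝ) : Hpar p q x ≤ 1 := by
  unfold Hpar
  split_ifs with h1 h2
  · norm_num
  · rcases lt_or_eq_of_le (hp.trans (not_lt.1 h1)) with hx | hx
    · have : 0 ≤ p / x := div_nonneg hp hx.le
      linarith
    · simp [← hx]
  · exact le_rfl

lemma intervalIntegrable_Hpar {p : ℝ} (hp : 0 ≤ p) (q c d : ℝ) :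
    IntervalIntegrable (Hpar p q) volume c d := by
  rw [intervalIntegrable_iff]
  refine ⟨(measurable_Hpar p q).aestronglyMeasurable.restrict, ?_⟩
  apply HasFiniteIntegral.restrict_of_bounded (C := 1) measure_Ioc_lt_top
  refine ae_of_all _ fun x => ?_
  rw [Real.norm_eq_abs, abs_le]
  exact ⟨by linarith [Hpar_nonneg hp q x], Hpar_le_one hp q x⟩

/-- Integral of the truncated Pareto cdf up to a point `z ≥ q`. -/
lemma Hpar_integral (a p q z : ℝ) (hp : 0 < p) (hap : a ≤ p) (hpq : p ≤ q) (hz : q ≤ z) :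
    ∫ x in a..z, Hpar p q x = z - p * (1 + Real.log (q / p)) := by
  have h1 : ∫ x in a..p, Hpar p q x = 0 := by
    have : ∫ x in a..p, Hpar p q x = ∫ x in a..p, (0 : ℝ) := by
      apply intervalIntegral.integral_congr_ae
      filter_upwards [ae_ne_pt p] with x hxp hx
      rw [Set.uIoc_of_le hap] at hx
      have : x < p := lt_of_le_of_ne hx.2 hxp
      simp [Hpar, this]
    simpa using this
  have h2 : ∫ x in p..q, Hpar p q x = (q - p) - p * Real.log (q / p) := by
    have e1 : ∫ x in p..q, Hpar p q x = ∫ x in p..q, (1 - p * (1 / x)) := by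
      apply intervalIntegral.integral_congr_ae
      filter_upwards [ae_ne_pt q] with x hxq hx
      rw [Set.uIoc_of_le hpq] at hx
      have hxq' : x < q := lt_of_le_of_ne hx.2 hxq
      have hxp : ¬ x < p := not_lt.2 hx.1.le
      simp [Hpar, hxp, hxq', div_eq_mul_inv, one_div]
    have hcont : ContinuousOn (fun x : ℝ => p * (1 / x)) (Set.uIcc p q) := by
      apply continuousOn_const.mul
      apply continuousOn_const.div continuousOn_id
      intro x hx
      rw [Set.uIcc_of_le hpq] at hx
      exact ne_of_gt (lt_of_lt_of_le hp hx.1)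
    have hint : IntervalIntegrable (fun x : ℝ => p * (1 / x)) volume p q :=
      hcont.intervalIntegrable
    rw [e1, intervalIntegral.integral_sub intervalIntegrable_const hint,
      intervalIntegral.integral_const, intervalIntegral.integral_const_mul,
      integral_one_div]
    · simp [smul_eq_mul]
    · rw [Set.uIcc_of_le hpq]
      intro h
      exact absurd h.1 (not_le.2 hp)
  have h3 : ∫ x in q..z, Hpar p q x = z - q := by
    have : ∫ x in q..z, Hpar p q x = ∫ x in q..z, (1 : ℝ) := by
      apply intervalIntegral.integral_congr_ae
      refine ae_of_all _ fun x hx => ?_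
      rw [Set.uIoc_of_le hz] at hx
      have hxp : ¬ x < p := not_lt.2 (hpq.trans hx.1.le)
      have hxq : ¬ x < q := not_lt.2 hx.1.le
      simp [Hpar, hxp, hxq]
    rw [this]; simp
  have i1 : IntervalIntegrable (Hpar p q) volume a p := intervalIntegrable_Hpar hp.le q a p
  have i2 : IntervalIntegrable (Hpar p q) volume p q := intervalIntegrable_Hpar hp.le q p q
  have i3 : IntervalIntegrable (Hpar p q) volume q z := intervalIntegrable_Hpar hp.le q q z
  have s1 := intervalIntegral.integral_add_adjacent_intervals i1 i2
  have s2 := intervalIntegral.integral_add_adjacent_intervals (i1.trans i2) i3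
  rw [← s2, ← s1, h1, h2, h3]
  ring

/-- The integral of the cdf of a probability measure supported on `[a,b]` equals `b - mean`. -/
lemma cdf_integral_eq (a b μbar : ℝ) (ha : 0 ≤ a) (hab : a ≤ b)
    (ν : Measure ℝ) [IsProbabilityMeasure ν] (hνs : ν (Set.Icc a b)ᶜ = 0)
    (G : ℝ → ℝ) (hG : ∀ x, G x = (ν (Set.Iic x)).toReal)
    (hmean : (∫ x, x ∂ν) = μbar) :
    ∫ x in a..b, G x = b - μbar := by
  have hGmono : Monotone G := by
    intro x y hxy
    rw [hG, hG]
    exact ENNReal.toReal_mono (measure_ne_top _ _) (measure_mono (Set.Iic_subset_Iic.2 hxy))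
  have hae : ∀ᵐ x ∂ν, x ∈ Set.Icc a b := by
    rw [ae_iff]
    exact hνs
  have hint : Integrable (fun x : ℝ => x) ν := by
    refine Integrable.mono' (integrable_const b) aestronglyMeasurable_id ?_
    filter_upwards [hae] with x hx
    rw [Real.norm_eq_abs, abs_of_nonneg (ha.trans hx.1)]
    exact hx.2
  have hnn : 0 ≤ᵐ[ν] fun x : ℝ => x := by
    filter_upwards [hae] with x hx
    exact ha.trans hx.1
  have key := hint.integral_eq_integral_meas_lt hnn
  rw [hmean] at key
  set h : ℝ → ℝ := fun t => (ν (Set.Ioi t)).toReal with hh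
  have hset : ∀ t : ℝ, {x : ℝ | t < x} = Set.Ioi t := fun t => rfl
  have key' : μbar = ∫ t in Set.Ioi (0:ℝ), h t := key
  have hmeas : Measurable h := by
    apply Measurable.ennreal_toReal
    exact Antitone.measurable fun s t hst => measure_mono fun x hx => lt_of_le_of_lt hst hx
  have hbd : ∀ t, |h t| ≤ 1 := by
    intro t
    rw [abs_of_nonneg ENNReal.toReal_nonneg]
    calc (ν (Set.Ioi t)).toReal ≤ (ν Set.univ).toReal :=
        ENNReal.toReal_mono (measure_ne_top _ _) (measure_mono (Set.subset_univ _))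
      _ = 1 := by simp
  have hintOn : ∀ c d : ℝ, IntervalIntegrable h volume c d := by
    intro c d
    rw [intervalIntegrable_iff]
    refine ⟨hmeas.aestronglyMeasurable.restrict, ?_⟩
    apply HasFiniteIntegral.restrict_of_bounded (C := 1) measure_Ioc_lt_top
    exact ae_of_all _ fun x => by simpa [Real.norm_eq_abs] using hbd x
  have hb0 : (0:ℝ) ≤ b := ha.trans hab
  -- h vanishes beyond b
  have hzero : ∀ t : ℝ, b ≤ t → h t = 0 := by
    intro t hbt
    have : ν (Set.Ioi t) = 0 := by
      refine measure_mono_null ?_ hνs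
      intro x hx
      simp only [Set.mem_compl_iff, Set.mem_Icc, not_and, not_le]
      intro _
      exact lt_of_le_of_lt hbt hx
    simp [hh, this]
  -- h = 1 - G
  have hG1 : ∀ t, h t = 1 - G t := by
    intro t
    have hcompl : ν (Set.Ioi t) = 1 - ν (Set.Iic t) := by
      rw [← Set.compl_Iic, prob_compl_eq_one_sub measurableSet_Iic]
    rw [hG]
    show (ν (Set.Ioi t)).toReal = 1 - (ν (Set.Iic t)).toReal
    rw [hcompl, ENNReal.toReal_sub_of_le prob_le_one ENNReal.one_ne_top]
    simp
  -- split the integral over Ioi 0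
  have hsplit : Set.Ioi (0:ℝ) = Set.Ioc 0 b ∪ Set.Ioi b :=
    (Set.Ioc_union_Ioi_eq_Ioi hb0).symm
  have hIoiInt : IntegrableOn h (Set.Ioi b) := by
    apply (integrableOn_congr_fun (fun t ht => (hzero t (le_of_lt ht)).symm)
      measurableSet_Ioi).1
    exact integrableOn_zero
  have hIocInt : IntegrableOn h (Set.Ioc 0 b) := by
    have := hintOn 0 b
    rw [intervalIntegrable_iff, Set.uIoc_of_le hb0] at this
    exact this
  have e0 : ∫ t in Set.Ioi (0:ℝ), h t = (∫ t in Set.Ioc (0:ℝ) b, h t) + ∫ t in Set.Ioi b, h t := by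
    rw [hsplit]
    exact setIntegral_union (Set.Ioc_disjoint_Ioi le_rfl) measurableSet_Ioi hIocInt hIoiInt
  have e1 : ∫ t in Set.Ioi b, h t = 0 := by
    rw [setIntegral_congr_fun measurableSet_Ioi (fun t ht => hzero t (le_of_lt ht))]
    simp
  have e2 : ∫ t in Set.Ioc (0:ℝ) b, h t = ∫ t in (0:ℝ)..b, h t :=
    (intervalIntegral.integral_of_le hb0).symm
  have e3 : (∫ t in (0:ℝ)..a, h t) + (∫ t in a..b, h t) = ∫ t in (0:ℝ)..b, h t :=
    intervalIntegral.integral_add_adjacent_intervals (hintOn 0 a) (hintOn a b)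
  have e4 : ∫ t in (0:ℝ)..a, h t = a := by
    have : ∫ t in (0:ℝ)..a, h t = ∫ t in (0:ℝ)..a, (1:ℝ) := by
      apply intervalIntegral.integral_congr_ae
      filter_upwards [ae_ne_pt a] with t hta ht
      rw [Set.uIoc_of_le ha] at ht
      have hta' : t < a := lt_of_le_of_ne ht.2 hta
      rw [hG1, hG]
      have : ν (Set.Iic t) = 0 := by
        refine measure_mono_null ?_ hνs
        intro x hx
        simp only [Set.mem_Iic] at hx
        simp only [Set.mem_compl_iff, Set.mem_Icc, not_and, not_le]
        intro hax
        exact absurd (hax.trans hx) (not_le.2 hta')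
      simp [this]
    rw [this]; simp
  have hGint : IntervalIntegrable G volume a b := hGmono.intervalIntegrable
  have e5 : ∫ t in a..b, h t = (b - a) - ∫ t in a..b, G t := by
    have : ∫ t in a..b, h t = ∫ t in a..b, (1 - G t) := by
      apply intervalIntegral.integral_congr fun t _ => hG1 t
    rw [this, intervalIntegral.integral_sub intervalIntegrable_const hGint,
      intervalIntegral.integral_const]
    simp [smul_eq_mul]
  have : μbar = a + ((b - a) - ∫ t in a..b, G t) + 0 := by
    rw [key', e0, e1, e2, ← e3, e4, e5]
  linarith

/-- If `G` (cdf of `ν`, with mean `μbar`) is dominated by the truncated Pareto `H_{π,b}`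
and `H_{π,τ}` has mean `μbar`, then `G` is a mean-preserving spread of `H_{π,τ}`. -/
theorem mps_of_fosd_and_mean (a b π τ μbar : ℝ) (ha : 0 ≤ a) (hab : a ≤ b)
    (hπ : π ∈ Set.Icc a b) (hτ : τ ∈ Set.Icc π b)
    (ν : Measure ℝ) [IsProbabilityMeasure ν] (hνs : ν (Set.Icc a b)ᶜ = 0)
    (G : ℝ → ℝ) (hG : ∀ x, G x = (ν (Set.Iic x)).toReal)
    (hmean : (∫ x, x ∂ν) = μbar)
    (hdom : ∀ x ∈ Set.Icc a b, Hpar π b x ≤ G x)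
    (hτmean : π * (1 + Real.log (τ / π)) = μbar) :
    (∀ z ∈ Set.Icc a b, (∫ x in a..z, Hpar π τ x) ≤ ∫ x in a..z, G x) ∧
      (∫ x in a..b, Hpar π τ x) = ∫ x in a..b, G x := by
  obtain ⟨haπ, hπb⟩ := hπ
  obtain ⟨hπτ, hτb⟩ := hτ
  have hGmono : Monotone G := by
    intro x y hxy
    rw [hG, hG]
    exact ENNReal.toReal_mono (measure_ne_top _ _) (measure_mono (Set.Iic_subset_Iic.2 hxy))
  have hG0 : ∀ x, 0 ≤ G x := fun x => by rw [hG]; exact ENNReal.toReal_nonneg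
  have hG1 : ∀ x, G x ≤ 1 := by
    intro x
    rw [hG]
    calc (ν (Set.Iic x)).toReal ≤ (ν Set.univ).toReal :=
        ENNReal.toReal_mono (measure_ne_top _ _) (measure_mono (Set.subset_univ _))
      _ = 1 := by simp
  rcases eq_or_lt_of_le (ha.trans haπ) with hπ0 | hπ0
  · -- degenerate case π = 0 : both cdfs are identically 1 on [a,b]
    have ha0 : a = 0 := le_antisymm (haπ.trans hπ0.symm.le) ha
    have hH1 : ∀ q : ℝ, ∀ x ∈ Set.Icc a b, Hpar π q x = 1 := by
      intro q x hx
      have hx0 : ¬ x < π := not_lt.2 (hπ0.symm.le.trans (ha0 ▸ hx.1 : (0:ℝ) ≤ x))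
      unfold Hpar
      rw [if_neg hx0]
      split_ifs with h
      · rw [← hπ0]; simp
      · rfl
    have hGeq : ∀ x ∈ Set.Icc a b, G x = 1 := by
      intro x hx
      have := hdom x hx
      rw [hH1 b x hx] at this
      exact le_antisymm (hG1 x) this
    have heq : ∀ z ∈ Set.Icc a b, (∫ x in a..z, Hpar π τ x) = ∫ x in a..z, G x := by
      intro z hz
      apply intervalIntegral.integral_congr
      intro x hx
      rw [Set.uIcc_of_le hz.1] at hx
      have hx' : x ∈ Set.Icc a b := ⟨hx.1, hx.2.trans hz.2⟩
      rw [hH1 τ x hx', hGeq x hx']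
    exact ⟨fun z hz => le_of_eq (heq z hz), heq b ⟨hab, le_rfl⟩⟩
  · -- main case π > 0
    have hIG : ∫ x in a..b, G x = b - μbar := cdf_integral_eq a b μbar ha hab ν hνs G hG hmean
    have hHform : ∀ z : ℝ, τ ≤ z → ∫ x in a..z, Hpar π τ x = z - μbar := by
      intro z hz
      rw [Hpar_integral a π τ z hπ0 haπ hπτ hz, hτmean]
    have hmain : ∀ z ∈ Set.Icc a b, (∫ x in a..z, Hpar π τ x) ≤ ∫ x in a..z, G x := by
      rintro z ⟨haz, hzb⟩
      rcases le_or_gt z π with h1 | h1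
      · have h0 : ∫ x in a..z, Hpar π τ x = ∫ x in a..z, (0:ℝ) := by
          apply intervalIntegral.integral_congr_ae
          filter_upwards [ae_ne_pt π] with x hxπ hx
          rw [Set.uIoc_of_le haz] at hx
          have : x < π := lt_of_le_of_ne (hx.2.trans h1) hxπ
          simp [Hpar, this]
        rw [h0, intervalIntegral.integral_zero]
        exact intervalIntegral.integral_nonneg haz fun x _ => hG0 x
      · rcases le_or_gt z τ with h2 | h2
        · have hcongr : ∫ x in a..z, Hpar π τ x = ∫ x in a..z, Hpar π b x := by
            apply intervalIntegral.integral_congr_ae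
            filter_upwards [ae_ne_pt τ, ae_ne_pt b] with x hxτ hxb hx
            rw [Set.uIoc_of_le haz] at hx
            by_cases hxπ : x < π
            · simp [Hpar, hxπ]
            · have hxτ' : x < τ := lt_of_le_of_ne (hx.2.trans h2) hxτ
              have hxb' : x < b := lt_of_le_of_ne (hxτ'.le.trans hτb) hxb
              simp [Hpar, hxπ, hxτ', hxb']
          rw [hcongr]
          exact intervalIntegral.integral_mono_on haz (intervalIntegrable_Hpar hπ0.le b a z)
            (hGmono.intervalIntegrable) fun x hx => hdom x ⟨hx.1, hx.2.trans hzb⟩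
        · have hH := hHform z h2.le
          have hsplit : (∫ x in a..z, G x) + ∫ x in z..b, G x = ∫ x in a..b, G x :=
            intervalIntegral.integral_add_adjacent_intervals hGmono.intervalIntegrable
              hGmono.intervalIntegrable
          have hGzb : ∫ x in z..b, G x ≤ b - z := by
            calc ∫ x in z..b, G x ≤ ∫ x in z..b, (1:ℝ) :=
                intervalIntegral.integral_mono_on hzb hGmono.intervalIntegrable
                  intervalIntegrable_const fun x _ => hG1 x
              _ = b - z := by simp
          rw [hH]
          linarith
    refine ⟨hmain, ?_⟩
    rw [hHform b hτb, hIG]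
end

section
/- For π* > 0 and s* > π*, the truncated Pareto distribution H = H_{π*,s*+} with CDF 1-π*/x on [π*, β] truncated at some β ≥ s*, satisfies: [log(s*/π*)]⁻¹ ∫ min(s̄-π*, s*-π*) dH(s̄) — where the integral over [π*,s*] uses density π*/s̄² and the remaining mass 1-H(s*)=π*/s* is assigned value s*-π* — equals π*. -/
/-- The expected revenue of the random pure bundling mechanism with log-uniform price
on `[π*, s*]` against a truncated-Pareto distributed buyer equals `π*`. -/
theorem random_bundling_revenue_pareto (π' s' : ℝ) (hπ : 0 < π') (hs : π' < s') :
    (Real.log (s' / π'))⁻¹ *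
        ((∫ x in π'..s', (x - π') * (π' / x ^ 2)) + (π' / s') * (s' - π')) = π' := by
  have hs0 : 0 < s' := hπ.trans hs
  have hkey : ∀ x ∈ Set.uIcc π' s', 0 < x := by
    intro x hx
    rcases Set.mem_uIcc.1 hx with h | h
    · linarith [h.1]
    · linarith [h.1]
  have hderiv : ∀ x ∈ Set.uIcc π' s',
      HasDerivAt (fun y => π' * Real.log y + π' ^ 2 / y) ((x - π') * (π' / x ^ 2)) x := by
    intro x hx
    have hx0 : 0 < x := hkey x hx
    have h1 : HasDerivAt (fun y => π' * Real.log y) (π' * x⁻¹) x :=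
      (Real.hasDerivAt_log hx0.ne').const_mul π'
    have h2 : HasDerivAt (fun y : ℝ => π' ^ 2 / y) (-(π' ^ 2) / x ^ 2) x := by
      simpa [div_eq_mul_inv, neg_div] using ((hasDerivAt_inv hx0.ne').const_mul (π' ^ 2))
    have : HasDerivAt (fun y => π' * Real.log y + π' ^ 2 / y) (π' * x⁻¹ + -(π' ^ 2) / x ^ 2) x := h1.add h2
    convert this using 1
    field_simp
    ring
  have hcont : ContinuousOn (fun x => (x - π') * (π' / x ^ 2)) (Set.uIcc π' s') := by
    apply ContinuousOn.mul (by fun_prop)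
    apply ContinuousOn.div continuousOn_const (by fun_prop)
    intro x hx
    exact pow_ne_zero _ (hkey x hx).ne'
  have hint : (∫ x in π'..s', (x - π') * (π' / x ^ 2)) =
      (π' * Real.log s' + π' ^ 2 / s') - (π' * Real.log π' + π' ^ 2 / π') := by
    rw [intervalIntegral.integral_eq_sub_of_hasDerivAt hderiv
      (hcont.intervalIntegrable)]
  rw [hint]
  have hlog : Real.log (s' / π') = Real.log s' - Real.log π' :=
    Real.log_div hs0.ne' hπ.ne'
  have hlogpos : 0 < Real.log (s' / π') := by
    apply Real.log_pos
    rw [lt_div_iff₀ hπ]; linarith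
  rw [hlog] at hlogpos ⊢
  rw [inv_mul_eq_iff_eq_mul₀ hlogpos.ne']
  field_simp
  ring
end

section
/- In the one-dimensional screening problem where a buyer with type s̄ > 0 values bundle b⊆N at κ_b·(|b|/n)·s̄ with κ_N = 1 and κ_b·|b|/n ≤ 1 for all b, the ratio of the grand-bundle value to any bundle value, n/(κ_b|b|), is constant in s̄; consequently, for any type distribution on (0, n·θ_h], there is an optimal incentive-compatible, individually rational mechanism that is pure bundling: it allocates only the grand bundle N at a posted price. -/
/-- Core one-dimensional screening bound: any IC & IR mechanism with allocation level
`x s ∈ [0, c]` earns at most `c * B` where `B` bounds all posted-price revenues. -/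
lemma key_posted_price (T : Finset ℝ) : ∀ (c B : ℝ), 0 ≤ c → 0 ≤ B →
    (∀ s ∈ T, 0 < s) →
    ∀ f : ℝ → ℝ, (∀ s ∈ T, 0 ≤ f s) →
    (∀ p ∈ T, p * ∑ s ∈ T.filter (fun s => p ≤ s), f s ≤ B) →
    ∀ x t : ℝ → ℝ, (∀ s ∈ T, 0 ≤ x s) → (∀ s ∈ T, x s ≤ c) →
    (∀ s ∈ T, ∀ s' ∈ T, x s' * s - t s' ≤ x s * s - t s) →
    (∀ s ∈ T, 0 ≤ x s * s - t s) →
    ∑ s ∈ T, f s * t s ≤ c * B := by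
  induction T using Finset.strongInduction with
  | _ T ih =>
    intro c B hc hB hTpos f hf hbound x t hx0 hxc hIC hIR
    rcases T.eq_empty_or_nonempty with rfl | hne
    · simpa using mul_nonneg hc hB
    · set s1 := T.min' hne with hs1
      have hs1T : s1 ∈ T := T.min'_mem hne
      have hx1 : 0 ≤ x s1 := hx0 s1 hs1T
      set T' := T.erase s1 with hT'
      have hss : T' ⊂ T := Finset.erase_ssubset hs1T
      -- facts about elements of T'
      have hmemT' : ∀ s ∈ T', s ∈ T ∧ s1 < s := by
        intro s hs
        have hsT : s ∈ T := Finset.mem_of_mem_erase hs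
        have hne1 : s ≠ s1 := Finset.ne_of_mem_erase hs
        exact ⟨hsT, lt_of_le_of_ne (T.min'_le s hsT) (Ne.symm hne1)⟩
      -- monotonicity of x
      have hmono : ∀ s ∈ T', x s1 ≤ x s := by
        intro s hs
        obtain ⟨hsT, hlt⟩ := hmemT' s hs
        have h1 := hIC s hsT s1 hs1T
        have h2 := hIC s1 hs1T s hsT
        nlinarith
      -- apply IH to the shifted mechanism on T'
      have hIH := ih T' hss (c - x s1) B (by linarith [hxc s1 hs1T]) hB
        (fun s hs => hTpos s (hmemT' s hs).1) f
        (fun s hs => hf s (hmemT' s hs).1)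
        (by
          intro p hp
          obtain ⟨hpT, hplt⟩ := hmemT' p hp
          have hfil : T'.filter (fun s => p ≤ s) = T.filter (fun s => p ≤ s) := by
            rw [hT', Finset.filter_erase, Finset.erase_eq_of_notMem]
            simp only [Finset.mem_filter]
            rintro ⟨-, hle⟩
            exact absurd hle (not_le.mpr hplt)
          rw [hfil]
          exact hbound p hpT)
        (fun s => x s - x s1) (fun s => t s - x s1 * s1)
        (by intro s hs; linarith [hmono s hs])
        (by intro s hs; linarith [hxc s (hmemT' s hs).1])
        (by
          intro s hs s' hs'
          have := hIC s (hmemT' s hs).1 s' (hmemT' s' hs').1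
          nlinarith)
        (by
          intro s hs
          have h1 := hIC s (hmemT' s hs).1 s1 hs1T
          have h2 := hIR s1 hs1T
          nlinarith)
      -- assemble
      have hsplit : ∑ s ∈ T, f s * t s = f s1 * t s1 + ∑ s ∈ T', f s * t s :=
        (Finset.add_sum_erase T (fun s => f s * t s) hs1T).symm
      have hsplit2 : ∑ s ∈ T', f s * t s
          = ∑ s ∈ T', f s * (t s - x s1 * s1) + x s1 * s1 * ∑ s ∈ T', f s := by
        rw [Finset.mul_sum, ← Finset.sum_add_distrib]
        apply Finset.sum_congr rfl
        intro s _; ring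
      have hfall : T.filter (fun s => s1 ≤ s) = T := by
        apply Finset.filter_true_of_mem
        intro s hs; exact T.min'_le s hs
      have hsum1 : s1 * ∑ s ∈ T, f s ≤ B := by
        have := hbound s1 hs1T
        rwa [hfall] at this
      have hsumsplit : ∑ s ∈ T, f s = f s1 + ∑ s ∈ T', f s :=
        (Finset.add_sum_erase T f hs1T).symm
      have hB1 : x s1 * (s1 * ∑ s ∈ T, f s) ≤ x s1 * B :=
        mul_le_mul_of_nonneg_left hsum1 hx1
      have ht1 : f s1 * t s1 ≤ f s1 * (x s1 * s1) := by
        have := hIR s1 hs1T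
        have hf1 := hf s1 hs1T
        nlinarith
      rw [hsplit, hsplit2]
      rw [hsumsplit] at hB1
      nlinarith [hIH]


/-- The utility of a (one-dimensional) type `s` from a menu item consisting of a random
allocation `q` over bundles and a transfer `t`: the value of bundle `b` is
`κ b * |b| * s / n`. -/
noncomputable def util (n : ℕ) (κ : Finset (Fin n) → ℝ) (s : ℝ)
    (q : Finset (Fin n) → ℝ) (t : ℝ) : ℝ :=
  (∑ b : Finset (Fin n), q b * (κ b * (b.card : ℝ) * s / n)) - t

/-- In the one-dimensional screening problem with bundle values `κ_b (|b|/n) s̄`, the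
ratio of the grand-bundle value to any bundle value is constant in the type, and
consequently pure bundling at some posted price is an optimal IC and IR mechanism. -/
theorem pure_bundling_optimal_one_dimensional (n : ℕ) (hn : 0 < n) (θh : ℝ)
    (hθh : 0 < θh)
    (κ : Finset (Fin n) → ℝ) (hκN : κ Finset.univ = 1)
    (hκpos : ∀ b, 0 ≤ κ b) (hfd : ∀ b : Finset (Fin n), κ b * (b.card : ℝ) / n ≤ 1)
    (T : Finset ℝ) (hT : ∀ s ∈ T, 0 < s ∧ s ≤ n * θh)
    (f : ℝ → ℝ) (hf : ∀ s ∈ T, 0 ≤ f s) (hf1 : (∑ s ∈ T, f s) = 1) :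
    (∀ b : Finset (Fin n), κ b * (b.card : ℝ) ≠ 0 → ∀ s : ℝ, 0 < s →
        (κ Finset.univ * ((Finset.univ : Finset (Fin n)).card : ℝ) * s / n) /
            (κ b * (b.card : ℝ) * s / n) = n / (κ b * (b.card : ℝ))) ∧
      ∃ p : ℝ, 0 ≤ p ∧
        ∀ (q : ℝ → Finset (Fin n) → ℝ) (t : ℝ → ℝ),
          (∀ s ∈ T, ∀ b, 0 ≤ q s b) →
          (∀ s ∈ T, (∑ b : Finset (Fin n), q s b) ≤ 1) →
          (∀ s ∈ T, ∀ s' ∈ T, util n κ s (q s') (t s') ≤ util n κ s (q s) (t s)) →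
          (∀ s ∈ T, 0 ≤ util n κ s (q s) (t s)) →
          (∑ s ∈ T, f s * t s) ≤ ∑ s ∈ T, f s * (if p ≤ s then p else 0) := by
  have hn' : (n : ℝ) ≠ 0 := Nat.cast_ne_zero.mpr hn.ne'
  constructor
  · intro b hb s hs
    rw [hκN, Finset.card_univ, Fintype.card_fin]
    field_simp
  · -- T is nonempty
    have hne : T.Nonempty := by
      rcases T.eq_empty_or_nonempty with rfl | h
      · simp at hf1
      · exact h
    -- choose the revenue-maximizing posted price among T
    obtain ⟨p, hpT, hpmax⟩ := T.exists_max_image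
      (fun p => p * ∑ s ∈ T.filter (fun s => p ≤ s), f s) hne
    have hppos : 0 < p := (hT p hpT).1
    refine ⟨p, hppos.le, ?_⟩
    intro q t hq0 hq1 hIC hIR
    set B : ℝ := p * ∑ s ∈ T.filter (fun s => p ≤ s), f s with hBdef
    have hB : 0 ≤ B := by
      apply mul_nonneg hppos.le
      exact Finset.sum_nonneg fun s hs => hf s (Finset.mem_of_mem_filter s hs)
    -- the posted-price revenue equals B
    have hRHS : ∑ s ∈ T, f s * (if p ≤ s then p else 0) = B := by
      rw [hBdef, Finset.mul_sum, Finset.sum_filter]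
      apply Finset.sum_congr rfl
      intro s _
      by_cases h : p ≤ s <;> simp [h, mul_comm]
    -- the one-dimensional allocation level
    set x : ℝ → ℝ := fun s => ∑ b : Finset (Fin n), q s b * (κ b * (b.card : ℝ) / n)
      with hxdef
    have hutil : ∀ s s' : ℝ, util n κ s (q s') (t s') = x s' * s - t s' := by
      intro s s'
      rw [util, hxdef]
      dsimp only
      rw [Finset.sum_mul]
      congr 1
      apply Finset.sum_congr rfl
      intro b _
      ring
    have hx0 : ∀ s ∈ T, 0 ≤ x s := by
      intro s hs
      apply Finset.sum_nonneg
      intro b _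
      apply mul_nonneg (hq0 s hs b)
      apply div_nonneg (mul_nonneg (hκpos b) (Nat.cast_nonneg _)) (Nat.cast_nonneg _)
    have hx1 : ∀ s ∈ T, x s ≤ 1 := by
      intro s hs
      calc x s ≤ ∑ b : Finset (Fin n), q s b := by
            apply Finset.sum_le_sum
            intro b _
            calc q s b * (κ b * (b.card : ℝ) / n) ≤ q s b * 1 :=
                  mul_le_mul_of_nonneg_left (hfd b) (hq0 s hs b)
              _ = q s b := mul_one _
        _ ≤ 1 := hq1 s hs
    have key := key_posted_price T 1 B zero_le_one hB (fun s hs => (hT s hs).1)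
      f hf (fun p' hp' => hpmax p' hp') x t hx0 hx1
      (fun s hs s' hs' => by
        have := hIC s hs s' hs'
        rwa [hutil s s', hutil s s] at this)
      (fun s hs => by
        have := hIR s hs
        rwa [hutil s s] at this)
    rw [hRHS]
    linarith [key]
end
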